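/- Let W be an n×m real matrix, let L_1, ..., L_ℓ (ℓ > 1) be a partition of {1,...,m}, and let W_i be the submatrix of W with columns indexed by L_i. Suppose: (i) for each i, dim(ker(W_i)) = 1 and every nonzero element of ker(W_i) has support equal to L_i; (ii) dim(ker(W)) = ℓ + 1; and (iii) ker(W) contains a strictly positive vector. Then there exists a nonzero vector d ∈ ker(W) ∩ ℝ^m_{≥0} such that for every i, supp(d) ∩ L_i is a proper subset of L_i. -/
import Mathlib


/-- Kernel vectors of `W` supported on the index set `L`. -/
noncomputable def kerBlock (n m : ℕ) (W : Matrix (Fin n) (Fin m) ℝ)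
    (L : Set (Fin m)) : Submodule ℝ (Fin m → ℝ) :=
  LinearMap.ker W.mulVecLin ⊓
    ⨅ j ∈ Lᶜ, LinearMap.ker (LinearMap.proj (R := ℝ) (φ := fun _ : Fin m => ℝ) j)

lemma mem_kerBlock {n m : ℕ} {W : Matrix (Fin n) (Fin m) ℝ} {L : Set (Fin m)}
    {z : Fin m → ℝ} :
    z ∈ kerBlock n m W L ↔ W.mulVec z = 0 ∧ ∀ j, j ∉ L → z j = 0 := by
  simp [kerBlock, Submodule.mem_inf, Submodule.mem_iInf, LinearMap.mem_ker,
    Matrix.mulVecLin_apply]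

lemma finrank_finset_sup_le_sum {V : Type*} [AddCommGroup V] [Module ℝ V]
    [FiniteDimensional ℝ V] {ι : Type*} (s : Finset ι) (p : ι → Submodule ℝ V) :
    Module.finrank ℝ ↥(s.sup p) ≤ ∑ i ∈ s, Module.finrank ℝ (p i) := by
  classical
  induction s using Finset.cons_induction with
  | empty => simp
  | cons a s ha ih =>
    rw [Finset.sup_cons, Finset.sum_cons]
    exact le_trans (Submodule.finrank_add_le_finrank_add_finrank _ _)
      (Nat.add_le_add_left ih _)

/-- If each block kernel is one-dimensional with full block support, the total
kernel has dimension `ℓ+1`, and the kernel contains a strictly positive vector,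
then there is a nonzero nonnegative kernel vector whose support meets each
linkage class in a proper subset. -/
theorem exists_cross_generator (n m l : ℕ) (hl : 1 < l)
    (W : Matrix (Fin n) (Fin m) ℝ) (L : Fin l → Set (Fin m))
    (hdisj : ∀ i j : Fin l, i ≠ j → Disjoint (L i) (L j))
    (hcover : (⋃ i, L i) = Set.univ)
    (hblock : ∀ i : Fin l,
      Module.finrank ℝ (kerBlock n m W (L i)) = 1 ∧
      ∀ z : Fin m → ℝ, z ∈ kerBlock n m W (L i) → z ≠ 0 → {j | z j ≠ 0} = L i)
    (hdim : Module.finrank ℝ (LinearMap.ker W.mulVecLin) = l + 1)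
    (hpos : ∃ x : Fin m → ℝ, (∀ i, 0 < x i) ∧ W.mulVec x = 0) :
    ∃ d : Fin m → ℝ, d ≠ 0 ∧ W.mulVec d = 0 ∧ (∀ j, 0 ≤ d j) ∧
      ∀ i : Fin l, {j | j ∈ L i ∧ d j ≠ 0} ⊂ L i := by
  classical
  set K := LinearMap.ker W.mulVecLin with hK
  set S := ⨆ i, kerBlock n m W (L i) with hSdef
  have hSK : S ≤ K := iSup_le fun i => inf_le_left
  have hfinS : Module.finrank ℝ S ≤ l := by
    have hsup : S = Finset.univ.sup (fun i => kerBlock n m W (L i)) := by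
      rw [Finset.sup_univ_eq_iSup]
    rw [hsup]
    calc Module.finrank ℝ ↥(Finset.univ.sup (fun i => kerBlock n m W (L i)))
        ≤ ∑ i, Module.finrank ℝ (kerBlock n m W (L i)) :=
          finrank_finset_sup_le_sum _ _
      _ = ∑ _i : Fin l, 1 := by
          exact Finset.sum_congr rfl fun i _ => (hblock i).1
      _ = l := by simp
  -- a kernel vector outside S
  have hv : ∃ v, v ∈ K ∧ v ∉ S := by
    by_contra h
    push_neg at h
    have hKS : K ≤ S := fun v hv => h v hv
    have := Submodule.finrank_mono hKS
    omega
  obtain ⟨v, hvK, hvS⟩ := hv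
  obtain ⟨x, hx, hxker⟩ := hpos
  have hm : 0 < m := by
    by_contra h
    have h1 : Module.finrank ℝ K ≤ Module.finrank ℝ (Fin m → ℝ) := Submodule.finrank_le K
    rw [Module.finrank_fin_fun] at h1
    omega
  -- a strictly positive kernel vector outside S
  have hvker : W.mulVec v = 0 := hvK
  have hy : ∃ y : Fin m → ℝ, (∀ j, 0 < y j) ∧ W.mulVec y = 0 ∧ y ∉ S := by
    by_cases hxS : x ∈ S
    · have hne : (Finset.univ : Finset (Fin m)).Nonempty := ⟨⟨0, hm⟩, Finset.mem_univ _⟩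
      set ε : ℝ := Finset.univ.inf' hne (fun j => x j / (|v j| + 1)) with hε
      have hεpos : 0 < ε := by
        rw [hε, Finset.lt_inf'_iff]
        intro j _
        exact div_pos (hx j) (by positivity)
      refine ⟨x + ε • v, ?_, ?_, ?_⟩
      · intro j
        have h1 : ε ≤ x j / (|v j| + 1) := Finset.inf'_le _ (Finset.mem_univ j)
        have h2 : ε * (|v j| + 1) ≤ x j := (le_div_iff₀ (by positivity)).mp h1
        have h3 : -|v j| ≤ v j := neg_abs_le (v j)
        have h4 : 0 ≤ |v j| := abs_nonneg (v j)
        simp only [Pi.add_apply, Pi.smul_apply, smul_eq_mul]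
        nlinarith
      · rw [Matrix.mulVec_add, hxker, Matrix.mulVec_smul, hvker]
        simp
      · intro hmem
        have h1 : (x + ε • v) - x ∈ S := Submodule.sub_mem _ hmem hxS
        have h2 : ε • v ∈ S := by simpa using h1
        have h3 : v ∈ S := by
          have := Submodule.smul_mem S ε⁻¹ h2
          simpa [smul_smul, inv_mul_cancel₀ hεpos.ne'] using this
        exact hvS h3
    · exact ⟨x, hx, hxker, hxS⟩
  obtain ⟨y, hy, hyker, hyS⟩ := hy
  -- block generators with a positive entry
  have hgen : ∀ i : Fin l, ∃ z : Fin m → ℝ, z ∈ kerBlock n m W (L i) ∧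
      {j | z j ≠ 0} = L i ∧ ∃ j, 0 < z j := by
    intro i
    have h1 := (hblock i).1
    have hbot : (kerBlock n m W (L i)) ≠ ⊥ := by
      intro h
      rw [h, finrank_bot] at h1
      omega
    obtain ⟨z, hz, hz0⟩ := Submodule.exists_mem_ne_zero_of_ne_bot hbot
    have hsupp := (hblock i).2 z hz hz0
    have hj0 : ∃ j, z j ≠ 0 := by
      by_contra h
      push_neg at h
      exact hz0 (funext h)
    obtain ⟨j0, hj0⟩ := hj0
    rcases hj0.lt_or_gt with h | h
    · refine ⟨-z, Submodule.neg_mem _ hz, ?_, ⟨j0, by simpa using h⟩⟩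
      exact (hblock i).2 (-z) (Submodule.neg_mem _ hz) (neg_ne_zero.mpr hz0)
    · exact ⟨z, hz, hsupp, j0, h⟩
  choose z hzmem hzsupp hzpos using hgen
  -- critical ratio minimizers
  have hmin : ∀ i : Fin l, ∃ j0 : Fin m, 0 < z i j0 ∧
      ∀ j, 0 < z i j → y j0 / z i j0 ≤ y j / z i j := by
    intro i
    obtain ⟨j0, hj0⟩ := hzpos i
    obtain ⟨a, ha, hmina⟩ := Finset.exists_min_image
      (Finset.univ.filter (fun j => 0 < z i j)) (fun j => y j / z i j)
      ⟨j0, by simp [hj0]⟩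
    exact ⟨a, (Finset.mem_filter.mp ha).2, fun j hj => hmina j (by simp [hj])⟩
  choose jm hjmpos hjmmin using hmin
  set s : Fin l → ℝ := fun i => y (jm i) / z i (jm i) with hs
  set d : Fin m → ℝ := y - ∑ i, s i • z i with hd
  have hzero : ∀ i j, j ∉ L i → z i j = 0 := by
    intro i j hj
    by_contra h
    exact hj ((hzsupp i) ▸ h)
  have hblockof : ∀ j : Fin m, ∃ i, j ∈ L i := fun j =>
    Set.mem_iUnion.mp (hcover ▸ Set.mem_univ j)
  have hcoord : ∀ (i : Fin l) (j : Fin m), j ∈ L i → d j = y j - s i * z i j := by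
    intro i j hj
    have hk : ∀ k, k ≠ i → z k j = 0 := by
      intro k hk
      refine hzero k j (fun hjk => ?_)
      exact Set.disjoint_left.mp (hdisj k i hk) hjk hj
    simp only [hd, Pi.sub_apply, Finset.sum_apply, Pi.smul_apply, smul_eq_mul]
    rw [Finset.sum_eq_single i (fun k _ hki => by rw [hk k hki, mul_zero])
      (fun h => absurd (Finset.mem_univ i) h)]
  have hjmL : ∀ i, jm i ∈ L i := by
    intro i
    have : jm i ∈ {j | z i j ≠ 0} := ne_of_gt (hjmpos i)
    rwa [hzsupp i] at this
  have hspos : ∀ i, 0 < s i := fun i => div_pos (hy _) (hjmpos i)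
  have hdnn : ∀ j, 0 ≤ d j := by
    intro j
    obtain ⟨i, hj⟩ := hblockof j
    rw [hcoord i j hj]
    rcases le_or_gt (z i j) 0 with h | h
    · nlinarith [hy j, hspos i]
    · have h1 := hjmmin i j h
      rw [div_le_div_iff₀ (hjmpos i) h] at h1
      have h2 : s i * z i j ≤ y j := by
        rw [hs, div_mul_eq_mul_div, div_le_iff₀ (hjmpos i)]
        linarith
      linarith
  have hdzero : ∀ i, d (jm i) = 0 := by
    intro i
    rw [hcoord i _ (hjmL i)]
    simp only [hs]
    rw [div_mul_cancel₀ _ (ne_of_gt (hjmpos i)), sub_self]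
  have hdker : W.mulVec d = 0 := by
    have hdK : d ∈ K := by
      refine Submodule.sub_mem _ hyker ?_
      exact Submodule.sum_mem _ fun i _ =>
        Submodule.smul_mem _ _ (inf_le_left (a := K) (hzmem i))
    exact hdK
  have hdne : d ≠ 0 := by
    intro h
    apply hyS
    have hy2 : y = ∑ i, s i • z i := by
      have := sub_eq_zero.mp (hd ▸ h)
      exact this
    rw [hy2]
    exact Submodule.sum_mem _ fun i _ => Submodule.smul_mem _ _
      (le_iSup (fun i => kerBlock n m W (L i)) i (hzmem i))
  refine ⟨d, hdne, hdker, hdnn, fun i => ?_⟩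
  refine (Set.ssubset_iff_of_subset (fun j hj => hj.1)).mpr ?_
  exact ⟨jm i, hjmL i, fun h => h.2 (hdzero i)⟩
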